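/- Let n ≥ 2 be an integer and let φ be an orientation-preserving homeomorphism of the unit circle {z ∈ ℂ : |z| = 1} satisfying φ(z^n) = φ(z)^n for all z on the unit circle. Then φ is a rotation by an (n−1)-st root of unity: there exists a ∈ ℂ with |a| = 1 and a^(n−1) = 1 such that φ(z) = a·z for all z on the unit circle. -/

import Mathlib

/-!
Write `e x = exp (2πix)`. Since `φ (e x) = e (f x)` and `φ` commutes with `z ↦ zⁿ`, the function
`f (n x) - n f x` is continuous and integer-valued, hence a constant `k`. Then
`u x = f x - x - f 0` is continuous and `1`-periodic, hence bounded, and satisfies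
`u (n x) = n u x`; iterating forces `u = 0`. So `f x = x + f 0`, `φ` is multiplication by
`a = e (f 0)`, and `(n - 1) f 0 = -k` gives `a ^ (n - 1) = 1`.
-/

open Complex Function Set
open scoped Real

lemma eq_of_continuous_of_forall_mem_range_intCast {X : Type*} [TopologicalSpace X]
    [PreconnectedSpace X] {g : X → ℝ} (hg : Continuous g)
    (hint : ∀ x, g x ∈ range ((↑) : ℤ → ℝ)) (x y : X) : g x = g y :=
  isPreconnected_univ.constant_of_mapsTo Int.isClosedEmbedding_coe_real.isInducing.isDiscrete_range
    hg.continuousOn (fun x _ ↦ hint x) trivial trivial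

lemma eq_zero_of_bounded_of_map_eq_mul {α : Type*} {T : α → α} {u : α → ℝ} {r : ℝ}
    (hr : 1 < |r|) (hbdd : ∃ C, ∀ x, |u x| ≤ C) (hT : ∀ x, u (T x) = r * u x) (x : α) :
    u x = 0 := by
  obtain ⟨C, hC⟩ := hbdd
  by_contra hx
  have hiter : ∀ m : ℕ, |u (T^[m] x)| = |r| ^ m * |u x| := by
    intro m
    induction m with
    | zero => simp
    | succ m ih => rw [iterate_succ_apply', hT, abs_mul, ih, pow_succ]; ring
  obtain ⟨m, hm⟩ := ((tendsto_pow_atTop_atTop_of_one_lt hr).atTop_mul_const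
    (abs_pos.mpr hx)).eventually_gt_atTop C |>.exists
  exact (hC _).not_gt (hiter m ▸ hm)

lemma eq_add_apply_zero_of_map_mul_eq_mul_add {f : ℝ → ℝ} {r k : ℝ} (hr : 1 < |r|)
    (hf : Continuous f) (hper : ∀ x, f (x + 1) = f x + 1)
    (hscale : ∀ x, f (r * x) = r * f x + k) (x : ℝ) : f x = x + f 0 := by
  set u : ℝ → ℝ := fun x ↦ f x - x - f 0
  have hu_per : Periodic u 1 := fun x ↦ by simp only [u, hper]; ring
  have hu_bdd : ∃ C, ∀ x, |u x| ≤ C := by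
    obtain ⟨C, hC⟩ := isBounded_iff_forall_norm_le.mp
      (hu_per.isBounded_of_continuous one_ne_zero (by fun_prop))
    exact ⟨C, fun x ↦ hC _ (mem_range_self x)⟩
  have hk : k = (1 - r) * f 0 := by
    have h0 := hscale 0
    rw [mul_zero] at h0
    linarith
  have hu_scale : ∀ x, u (r * x) = r * u x := fun x ↦ by simp only [u, hscale, hk]; ring
  linarith [eq_zero_of_bounded_of_map_eq_mul hr hu_bdd hu_scale x]

lemma norm_exp_two_pi_I_mul (x : ℝ) : ‖exp (2 * π * I * x)‖ = 1 := by
  rw [show 2 * π * I * x = ((2 * π * x : ℝ) : ℂ) * I by push_cast; ring]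
  exact norm_exp_ofReal_mul_I _

lemma exp_two_pi_I_mul_natCast_mul (n : ℕ) (x : ℝ) :
    exp (2 * π * I * ((n * x : ℝ) : ℂ)) = exp (2 * π * I * x) ^ n := by
  rw [← exp_nat_mul]; congr 1; push_cast; ring

lemma exp_two_pi_I_mul_intCast (m : ℤ) : exp (2 * π * I * ((m : ℝ) : ℂ)) = 1 := by
  rw [← exp_int_mul_two_pi_mul_I m]; congr 1; push_cast; ring

lemma exists_int_eq_add_of_exp_two_pi_I_mul_eq {x y : ℝ}
    (h : exp (2 * π * I * x) = exp (2 * π * I * y)) : ∃ m : ℤ, x = y + m := by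
  obtain ⟨m, hm⟩ := exp_eq_exp_iff_exists_int.mp h
  refine ⟨m, ?_⟩
  have h2πI : 2 * π * I ≠ 0 := by simp [Real.pi_ne_zero, I_ne_zero]
  have : (x : ℂ) = y + m := mul_left_cancel₀ h2πI (by rw [hm]; ring)
  exact_mod_cast this

lemma exists_exp_two_pi_I_mul_eq {z : ℂ} (hz : ‖z‖ = 1) : ∃ x : ℝ, exp (2 * π * I * x) = z := by
  refine ⟨arg z / (2 * π), ?_⟩
  conv_rhs => rw [← norm_mul_exp_arg_mul_I z, hz]
  have hπ : (π : ℂ) ≠ 0 := ofReal_ne_zero.mpr Real.pi_ne_zero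
  push_cast
  field_simp

theorem is_rotation_by_root_of_unity_general (n : ℕ) (hn : 2 ≤ n) (φ : ℂ → ℂ) (f : ℝ → ℝ)
    (hf_cont : Continuous f)
    (hf_per : ∀ x : ℝ, f (x + 1) = f x + 1)
    (hlift : ∀ x : ℝ, φ (Complex.exp (2 * Real.pi * Complex.I * x)) =
      Complex.exp (2 * Real.pi * Complex.I * (f x)))
    (hcomm : ∀ z : ℂ, ‖z‖ = 1 → φ (z ^ n) = (φ z) ^ n) :
    ∃ a : ℂ, ‖a‖ = 1 ∧ a ^ (n - 1) = 1 ∧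
      ∀ z : ℂ, ‖z‖ = 1 → φ z = a * z := by
  set g : ℝ → ℝ := fun x ↦ f (n * x) - n * f x
  have hg_int : ∀ x, g x ∈ range ((↑) : ℤ → ℝ) := fun x ↦ by
    obtain ⟨m, hm⟩ := exists_int_eq_add_of_exp_two_pi_I_mul_eq (x := f (n * x)) (y := n * f x) <| by
      rw [← hlift, exp_two_pi_I_mul_natCast_mul, hcomm _ (norm_exp_two_pi_I_mul x), hlift,
        exp_two_pi_I_mul_natCast_mul]
    exact ⟨m, by simp only [g, hm]; ring⟩
  obtain ⟨k, hk⟩ := hg_int 0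
  have hscale : ∀ x, f (n * x) = n * f x + k := fun x ↦ by
    linarith [eq_of_continuous_of_forall_mem_range_intCast (by fun_prop) hg_int x 0]
  have hr : 1 < |(n : ℝ)| := by
    rw [Nat.abs_cast]; exact_mod_cast hn
  have hf_eq := eq_add_apply_zero_of_map_mul_eq_mul_add hr hf_cont hf_per hscale
  refine ⟨exp (2 * π * I * f 0), norm_exp_two_pi_I_mul _, ?_, fun z hz ↦ ?_⟩
  · have hk0 : ((n - 1 : ℕ) : ℝ) * f 0 = (-k : ℤ) := by
      have h0 := hscale 0
      rw [mul_zero] at h0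
      push_cast [Nat.cast_sub (by omega : 1 ≤ n)]
      linarith
    rw [← exp_two_pi_I_mul_natCast_mul, hk0, exp_two_pi_I_mul_intCast]
  · obtain ⟨x, rfl⟩ := exists_exp_two_pi_I_mul_eq hz
    rw [hlift, hf_eq, ← exp_add]
    congr 1; push_cast; ring

/-- An orientation-preserving homeomorphism of the unit circle (given by a continuous,
strictly increasing lift `f` with `f (x + 1) = f x + 1`) that commutes with
`z ↦ z ^ n` (`n ≥ 2`) is a rotation by an `(n - 1)`-st root of unity. -/
theorem is_rotation_by_root_of_unity (n : ℕ) (hn : 2 ≤ n) (φ : ℂ → ℂ) (f : ℝ → ℝ)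
    (hf_cont : Continuous f) (hf_mono : StrictMono f)
    (hf_per : ∀ x : ℝ, f (x + 1) = f x + 1)
    (hlift : ∀ x : ℝ, φ (Complex.exp (2 * Real.pi * Complex.I * x)) =
      Complex.exp (2 * Real.pi * Complex.I * (f x)))
    (hcomm : ∀ z : ℂ, ‖z‖ = 1 → φ (z ^ n) = (φ z) ^ n) :
    ∃ a : ℂ, ‖a‖ = 1 ∧ a ^ (n - 1) = 1 ∧
      ∀ z : ℂ, ‖z‖ = 1 → φ z = a * z :=
  is_rotation_by_root_of_unity_general n hn φ f hf_cont hf_per hlift hcomm
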